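/- Let N ≥ 2, m, ħ, ω > 0, c ≠ 0 and λ ∈ ℝ. Define Φ : (Fin N → ℝ) → ℝ by Φ(x) := ∏_{i<j} |sinh( c·x_{ij} )|^{λ} · exp( − mω ∑_k x_k² / (2ħ) ). Then for every x with pairwise distinct coordinates, − (ħ²/2m) ∑_i ∂²_{x_i} Φ(x) + [ (1/2) m ω² ∑_i x_i² + (ħ² λ(λ−1) c²/m) ∑_{i<j} 1/sinh²( c·x_{ij} ) − ħ λ ω c ∑_{i<j} coth( c·x_{ij} )·x_{ij} ] Φ(x) = [ (1/2) N ħ ω − ħ² λ² c² N(N²−1) / (6m) ] · Φ(x). -/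

import Mathlib

open Finset

/-- The real hyperbolic cotangent. -/
noncomputable def coth (u : ℝ) : ℝ := Real.cosh u / Real.sinh u

lemma coth_neg' (u : ℝ) : coth (-u) = - coth u := by
  simp [coth, Real.sinh_neg, Real.cosh_neg, div_neg]

lemma sinh_ne_zero' {u : ℝ} (hu : u ≠ 0) : Real.sinh u ≠ 0 :=
  Real.sinh_ne_zero.mpr hu

lemma coth_sq' {u : ℝ} (hu : u ≠ 0) : coth u ^ 2 = 1 + 1 / (Real.sinh u) ^ 2 := by
  have h := sinh_ne_zero' hu
  rw [coth, div_pow, Real.cosh_sq]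
  field_simp

lemma coth_triple {a b : ℝ} (ha : a ≠ 0) (hb : b ≠ 0) (hab : a + b ≠ 0) :
    coth a * coth (a+b) + coth (a+b) * coth b - coth a * coth b = 1 := by
  have h1 := sinh_ne_zero' ha
  have h2 := sinh_ne_zero' hb
  have h3 := sinh_ne_zero' hab
  rw [coth, coth, coth]
  field_simp
  rw [Real.sinh_add, Real.cosh_add]
  ring

lemma erase_split {N : ℕ} (i : Fin N) (e : Fin N → ℝ) :
    ∑ j ∈ univ.erase i, e j
      = (∑ j ∈ univ.filter (fun j => i < j), e j) + ∑ j ∈ univ.filter (fun j => j < i), e j := by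
  rw [← Finset.filter_ne' (univ : Finset (Fin N)) i,
      ← Finset.sum_filter_add_sum_filter_not (univ.filter (fun a => a ≠ i)) (fun j => i < j) e]
  congr 1
  · apply Finset.sum_congr _ (fun _ _ => rfl)
    ext j
    simp only [Finset.mem_filter, Finset.mem_univ, true_and]
    constructor
    · rintro ⟨h1, h2⟩; exact h2
    · intro h; exact ⟨Fin.ne_of_gt h, h⟩
  · apply Finset.sum_congr _ (fun _ _ => rfl)
    ext j
    simp only [Finset.mem_filter, Finset.mem_univ, true_and]
    omega

lemma sum_swap_split {N : ℕ} (w : Fin N → Fin N → ℝ) :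
    ∑ i, ∑ j ∈ univ.erase i, w i j
      = ∑ i, ∑ j ∈ univ.filter (fun j => i < j), (w i j + w j i) := by
  have h1 : ∀ i, ∑ j ∈ univ.erase i, w i j
      = (∑ j ∈ univ.filter (fun j => i < j), w i j) + ∑ j ∈ univ.filter (fun j => j < i), w i j :=
    fun i => erase_split i (w i)
  simp only [h1, Finset.sum_add_distrib]
  congr 1
  have : ∑ i : Fin N, ∑ j ∈ univ.filter (fun j => j < i), w i j
      = ∑ j : Fin N, ∑ i ∈ univ.filter (fun i => j < i), w i j := by
    apply Finset.sum_comm'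
    intro a b
    simp [and_comm]
  rw [this]

lemma pair_split {N : ℕ} (i : Fin N) (F : Fin N → Fin N → ℝ) (e : Fin N → ℝ)
    (h1 : ∀ b, i < b → F i b = e b) (h2 : ∀ a, a < i → F a i = e a) :
    ∑ a, ∑ b ∈ univ.filter (fun b => a < b), F a b
      = (∑ j ∈ univ.erase i, e j)
        + ∑ a ∈ univ.erase i, ∑ b ∈ (univ.filter (fun b => a < b)).erase i, F a b := by
  rw [← Finset.add_sum_erase univ (fun a => ∑ b ∈ univ.filter (fun b => a < b), F a b)
      (Finset.mem_univ i)]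
  have hrow_i : ∑ b ∈ univ.filter (fun b => i < b), F i b
      = ∑ b ∈ univ.filter (fun b => i < b), e b := by
    apply Finset.sum_congr rfl
    intro b hb
    simp only [Finset.mem_filter] at hb
    exact h1 b hb.2
  have hrow : ∀ a ∈ univ.erase i,
      ∑ b ∈ univ.filter (fun b => a < b), F a b
        = (if a < i then e a else 0) + ∑ b ∈ (univ.filter (fun b => a < b)).erase i, F a b := by
    intro a ha
    by_cases hai : a < i
    · have hi : i ∈ univ.filter (fun b => a < b) := by simp [hai]
      rw [← Finset.add_sum_erase _ (F a) hi, if_pos hai, h2 a hai]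
    · have hi : i ∉ univ.filter (fun b => a < b) := by simp [hai]
      rw [Finset.erase_eq_of_notMem hi, if_neg hai, zero_add]
  rw [hrow_i, Finset.sum_congr rfl hrow, Finset.sum_add_distrib]
  have hsw : ∑ a ∈ univ.erase i, (if a < i then e a else 0)
      = ∑ a ∈ univ.filter (fun a => a < i), e a := by
    rw [Finset.sum_filter]
    exact Finset.sum_erase _ (by simp)
  rw [hsw, erase_split i e]
  ring

def Tset (N : ℕ) : Finset (Fin N × Fin N × Fin N) :=
  univ.filter (fun p => p.1 ≠ p.2.1 ∧ p.1 ≠ p.2.2 ∧ p.2.1 ≠ p.2.2)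

lemma sum_erase_ite {N : ℕ} (s : Finset (Fin N)) (a : Fin N) (h : Fin N → ℝ) :
    ∑ b ∈ s.erase a, h b = ∑ b ∈ s, if b ≠ a then h b else 0 := by
  rw [← Finset.filter_ne' s a, Finset.sum_filter]

lemma Tset_conv {N : ℕ} (F : Fin N → Fin N → Fin N → ℝ) :
    ∑ p ∈ Tset N, F p.1 p.2.1 p.2.2
      = ∑ i, ∑ j ∈ univ.erase i, ∑ k ∈ (univ.erase i).erase j, F i j k := by
  rw [Tset, Finset.sum_filter, Fintype.sum_prod_type]
  apply Finset.sum_congr rfl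
  intro i _
  rw [Fintype.sum_prod_type, sum_erase_ite]
  apply Finset.sum_congr rfl
  intro j _
  rw [sum_erase_ite, sum_erase_ite]
  by_cases hji : j ≠ i
  · rw [if_pos hji]
    apply Finset.sum_congr rfl
    intro k _
    split_ifs with h1 h2 h3 h4 h5 <;> first | rfl | (exfalso; tauto)
  · rw [if_neg hji]
    push_neg at hji
    subst hji
    apply Finset.sum_eq_zero
    intro k _
    split_ifs with h1 <;> first | rfl | (exfalso; tauto)

lemma Tset_cyc {N : ℕ} (F : Fin N → Fin N → Fin N → ℝ) :
    ∑ p ∈ Tset N, F p.1 p.2.1 p.2.2 = ∑ p ∈ Tset N, F p.2.1 p.2.2 p.1 := by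
  apply Finset.sum_nbij' (fun p => (p.2.2, p.1, p.2.1)) (fun p => (p.2.1, p.2.2, p.1))
  · intro p hp; simp only [Tset, Finset.mem_filter, Finset.mem_univ, true_and] at hp ⊢; tauto
  · intro p hp; simp only [Tset, Finset.mem_filter, Finset.mem_univ, true_and] at hp ⊢; tauto
  · intro p _; rfl
  · intro p _; rfl
  · intro p _; rfl

lemma triple_sum {N : ℕ} (hN : 2 ≤ N) (t : Fin N → Fin N → ℝ)
    (hpt : ∀ i j k : Fin N, i ≠ j → i ≠ k → j ≠ k →
      t i j * t i k + t j k * t j i + t k i * t k j = 1) :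
    3 * ∑ i, ∑ j ∈ univ.erase i, ∑ k ∈ (univ.erase i).erase j, t i j * t i k
      = (N : ℝ) * ((N : ℝ) - 1) * ((N : ℝ) - 2) := by
  have h1 := Tset_conv (fun i j k => t i j * t i k)
  have h2 := Tset_cyc (fun i j k => t i j * t i k)
  have h3 := Tset_cyc (fun i j k => t j k * t j i)
  have hone : ∑ p ∈ Tset N, (1 : ℝ) = (N : ℝ) * ((N : ℝ) - 1) * ((N : ℝ) - 2) := by
    rw [Tset_conv (fun _ _ _ => (1:ℝ))]
    have h4 : ∀ i : Fin N, ∑ j ∈ univ.erase i, ∑ k ∈ (univ.erase i).erase j, (1:ℝ)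
        = ((N : ℝ) - 1) * ((N : ℝ) - 2) := by
      intro i
      have hcard : (univ.erase i).card = N - 1 := by
        rw [Finset.card_erase_of_mem (Finset.mem_univ i), Finset.card_univ, Fintype.card_fin]
      have h5 : ∀ j ∈ univ.erase i, ∑ k ∈ (univ.erase i).erase j, (1:ℝ) = (N : ℝ) - 2 := by
        intro j hj
        rw [Finset.sum_const, Finset.card_erase_of_mem hj, hcard, nsmul_eq_mul]
        have h6 : ((N - 1 - 1 : ℕ) : ℝ) = (N : ℝ) - 2 := by
          have h7 : N - 1 - 1 = N - 2 := by omega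
          rw [h7, Nat.cast_sub hN]; norm_num
        rw [h6, mul_one]
      rw [Finset.sum_congr rfl h5, Finset.sum_const, hcard, nsmul_eq_mul,
        Nat.cast_sub (by omega : 1 ≤ N)]
      norm_num
    rw [Finset.sum_congr rfl (fun i _ => h4 i), Finset.sum_const, Finset.card_univ,
      Fintype.card_fin, nsmul_eq_mul]
    ring
  rw [← h1]
  have key : ∑ p ∈ Tset N, (t p.1 p.2.1 * t p.1 p.2.2 + t p.2.1 p.2.2 * t p.2.1 p.1
      + t p.2.2 p.1 * t p.2.2 p.2.1) = ∑ p ∈ Tset N, (1:ℝ) := by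
    apply Finset.sum_congr rfl
    intro p hp
    simp only [Tset, Finset.mem_filter, Finset.mem_univ, true_and] at hp
    exact hpt p.1 p.2.1 p.2.2 hp.1 hp.2.1 hp.2.2
  rw [Finset.sum_add_distrib, Finset.sum_add_distrib] at key
  have e2 : ∑ p ∈ Tset N, t p.2.1 p.2.2 * t p.2.1 p.1
      = ∑ p ∈ Tset N, t p.1 p.2.1 * t p.1 p.2.2 := by rw [h2]
  have e3 : ∑ p ∈ Tset N, t p.2.2 p.1 * t p.2.2 p.2.1
      = ∑ p ∈ Tset N, t p.1 p.2.1 * t p.1 p.2.2 := by rw [h2, h3]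
  rw [e2, e3, hone] at key
  linarith

lemma key_deriv {N : ℕ} (m hbar ω c lam : ℝ) (hhbar : hbar ≠ 0) (hc : c ≠ 0)
    (Φ : (Fin N → ℝ) → ℝ)
    (hΦ : ∀ x, Φ x =
      (∏ i : Fin N, ∏ j ∈ univ.filter (fun j => i < j), |Real.sinh (c * (x i - x j))| ^ lam)
      * Real.exp (- m * ω * (∑ k, (x k) ^ 2) / (2 * hbar)))
    (x : Fin N → ℝ) (hx : ∀ i j : Fin N, i ≠ j → x i ≠ x j) (i : Fin N) :
    iteratedDeriv 2 (fun y => Φ (Function.update x i y)) (x i)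
      = ((lam * (c^2 * ∑ j ∈ univ.erase i, (1 - coth (c * (x i - x j))^2)) - m*ω/hbar)
          + (lam * (c * ∑ j ∈ univ.erase i, coth (c * (x i - x j))) - m*ω*(x i)/hbar)^2)
        * Φ x := by
  set B : ℝ := ∑ a ∈ univ.erase i, ∑ b ∈ (univ.filter (fun b => a < b)).erase i,
      Real.log (Real.sinh (c * (x a - x b))) with hB
  set K : ℝ := ∑ k ∈ univ.erase i, (x k)^2 with hK
  set S : ℝ → ℝ := fun y =>
      lam * ((∑ j ∈ univ.erase i, Real.log (Real.sinh (c * (y - x j)))) + B)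
        - m * ω * (y^2 + K) / (2 * hbar) with hS
  set Sd : ℝ → ℝ := fun y =>
      lam * (c * ∑ j ∈ univ.erase i, coth (c * (y - x j))) - m * ω * y / hbar with hSd
  have step1 : ∀ y : ℝ, (∀ j, j ≠ i → y ≠ x j) → Φ (Function.update x i y) = Real.exp (S y) := by
    intro y hy
    set u := Function.update x i y with hu
    have hui : u i = y := Function.update_self i y x
    have hun : ∀ j, j ≠ i → u j = x j := fun j hj => Function.update_of_ne hj y x
    have hune : ∀ a b : Fin N, a ≠ b → u a ≠ u b := by
      intro a b hab
      by_cases ha : a = i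
      · subst ha
        rw [hui, hun b (Ne.symm hab)]
        exact hy b (Ne.symm hab)
      · by_cases hb : b = i
        · subst hb
          rw [hui, hun a ha]
          exact fun h => (hy a ha) h.symm
        · rw [hun a ha, hun b hb]; exact hx a b hab
    rw [hΦ u]
    have hprod : (∏ a : Fin N, ∏ b ∈ univ.filter (fun b => a < b), |Real.sinh (c * (u a - u b))| ^ lam)
        = Real.exp (lam * ∑ a : Fin N, ∑ b ∈ univ.filter (fun b => a < b),
            Real.log (Real.sinh (c * (u a - u b)))) := by
      rw [Finset.mul_sum, Real.exp_sum]
      apply Finset.prod_congr rfl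
      intro a _
      rw [Finset.mul_sum, Real.exp_sum]
      apply Finset.prod_congr rfl
      intro b hb
      simp only [Finset.mem_filter] at hb
      have hs : Real.sinh (c * (u a - u b)) ≠ 0 :=
        sinh_ne_zero' (mul_ne_zero hc (sub_ne_zero.2 (hune a b (Fin.ne_of_lt hb.2))))
      rw [Real.rpow_def_of_pos (abs_pos.2 hs), Real.log_abs, mul_comm]
    have hsum : ∑ a : Fin N, ∑ b ∈ univ.filter (fun b => a < b),
          Real.log (Real.sinh (c * (u a - u b)))
        = (∑ j ∈ univ.erase i, Real.log (Real.sinh (c * (y - x j)))) + B := by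
      rw [pair_split i _ (fun j => Real.log (Real.sinh (c * (y - x j))))]
      · congr 1
        apply Finset.sum_congr rfl
        intro a ha
        apply Finset.sum_congr rfl
        intro b hb
        simp only [Finset.mem_erase] at ha hb
        rw [hun a ha.1, hun b hb.1]
      · intro b hib
        rw [hui, hun b (Fin.ne_of_gt hib)]
      · intro a hai
        rw [hui, hun a (Fin.ne_of_lt hai)]
        have h1 : c * (x a - y) = -(c * (y - x a)) := by ring
        rw [h1, Real.sinh_neg, Real.log_neg_eq_log]
    have hsq : ∑ k, (u k)^2 = y^2 + K := by
      have h1 : ∀ k, (u k)^2 = Function.update (fun k => (x k)^2) i (y^2) k := by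
        intro k
        by_cases h : k = i
        · subst h; rw [hui, Function.update_self]
        · rw [hun k h, Function.update_of_ne h]
      rw [Finset.sum_congr rfl (fun k _ => h1 k), Finset.sum_update_of_mem (Finset.mem_univ i),
        Finset.sdiff_singleton_eq_erase]
    rw [hprod, hsum, hsq, ← Real.exp_add]
    congr 1
    simp only [hS]
    ring
  have hSder : ∀ y : ℝ, (∀ j, j ≠ i → y ≠ x j) → HasDerivAt S (Sd y) y := by
    intro y hy
    have hL : HasDerivAt (fun y => ∑ j ∈ univ.erase i, Real.log (Real.sinh (c * (y - x j))))
        (∑ j ∈ univ.erase i, c * coth (c * (y - x j))) y := by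
      apply HasDerivAt.fun_sum
      intro j hj
      simp only [Finset.mem_erase] at hj
      have harg : HasDerivAt (fun y : ℝ => c * (y - x j)) c y := by
        simpa using ((hasDerivAt_id y).sub_const (x j)).const_mul c
      have hs : Real.sinh (c * (y - x j)) ≠ 0 :=
        sinh_ne_zero' (mul_ne_zero hc (sub_ne_zero.2 (hy j hj.1)))
      have := (Real.hasDerivAt_log hs).comp y ((Real.hasDerivAt_sinh _).comp y harg)
      refine this.congr_deriv ?_
      rw [coth]
      field_simp
    have hquad : HasDerivAt (fun y : ℝ => m * ω * (y^2 + K) / (2 * hbar)) (m * ω * y / hbar) y := by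
      have := (((hasDerivAt_pow 2 y).add_const K).const_mul (m * ω)).div_const (2 * hbar)
      refine this.congr_deriv ?_
      field_simp
      ring
    have := ((hL.add_const B).const_mul lam).sub hquad
    refine this.congr_deriv ?_
    simp only [hSd, Finset.mul_sum]
  have hSdder : HasDerivAt Sd
      (lam * (c^2 * ∑ j ∈ univ.erase i, (1 - coth (c * (x i - x j))^2)) - m * ω / hbar) (x i) := by
    have hsum : HasDerivAt (fun y => ∑ j ∈ univ.erase i, coth (c * (y - x j)))
        (∑ j ∈ univ.erase i, (1 - coth (c * (x i - x j))^2) * c) (x i) := by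
      apply HasDerivAt.fun_sum
      intro j hj
      simp only [Finset.mem_erase] at hj
      have harg : HasDerivAt (fun y : ℝ => c * (y - x j)) c (x i) := by
        simpa using ((hasDerivAt_id (x i)).sub_const (x j)).const_mul c
      have hne : c * (x i - x j) ≠ 0 :=
        mul_ne_zero hc (sub_ne_zero.2 (hx i j (Ne.symm hj.1)))
      have hcoth : HasDerivAt coth (1 - coth (c * (x i - x j)) ^ 2) (c * (x i - x j)) := by
        have h := sinh_ne_zero' hne
        have := (Real.hasDerivAt_cosh (c * (x i - x j))).div (Real.hasDerivAt_sinh (c * (x i - x j))) h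
        refine this.congr_deriv ?_
        rw [coth, div_pow]
        have hcs := Real.cosh_sq (c * (x i - x j))
        field_simp
      exact hcoth.comp (x i) harg
    have hlin : HasDerivAt (fun y : ℝ => m * ω * y / hbar) (m * ω / hbar) (x i) := by
      have := ((hasDerivAt_id (x i)).const_mul (m * ω)).div_const hbar
      refine this.congr_deriv ?_
      ring
    have h := ((hsum.const_mul c).const_mul lam).sub hlin
    have hval : lam * (c * ∑ j ∈ univ.erase i, (1 - coth (c * (x i - x j))^2) * c) - m * ω / hbar
        = lam * (c^2 * ∑ j ∈ univ.erase i, (1 - coth (c * (x i - x j))^2)) - m * ω / hbar := by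
      rw [← Finset.sum_mul]
      ring
    rw [← hval]
    exact h
  have hxi : ∀ j, j ≠ i → (x i) ≠ x j := fun j hj => hx i j (Ne.symm hj)
  have hev : ∀ᶠ y in nhds (x i), ∀ j, j ≠ i → y ≠ x j := by
    rw [Filter.eventually_all]
    intro j
    by_cases hj : j = i
    · exact Filter.Eventually.of_forall (fun y h => absurd hj h)
    · exact (eventually_ne_nhds (hxi j hj)).mono (fun y h _ => h)
  have hfg : (fun y => Φ (Function.update x i y)) =ᶠ[nhds (x i)] (fun y => Real.exp (S y)) :=
    hev.mono (fun y hy => step1 y hy)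
  have hgd : ∀ y : ℝ, (∀ j, j ≠ i → y ≠ x j) →
      HasDerivAt (fun y => Real.exp (S y)) (Real.exp (S y) * Sd y) y :=
    fun y hy => (hSder y hy).exp
  have hd1 : deriv (fun y => Φ (Function.update x i y)) =ᶠ[nhds (x i)]
      (fun y => Real.exp (S y) * Sd y) := by
    refine (hfg.deriv).trans (hev.mono (fun y hy => ?_))
    exact (hgd y hy).deriv
  have hG1 : HasDerivAt (fun y => Real.exp (S y) * Sd y)
      (Real.exp (S (x i)) * Sd (x i) * Sd (x i) + Real.exp (S (x i)) *
        (lam * (c^2 * ∑ j ∈ univ.erase i, (1 - coth (c * (x i - x j))^2)) - m * ω / hbar))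
      (x i) :=
    (hgd (x i) hxi).mul hSdder
  have h2 : iteratedDeriv 2 (fun y => Φ (Function.update x i y)) (x i)
      = deriv (deriv (fun y => Φ (Function.update x i y))) (x i) := by
    rw [show (2:ℕ) = 1 + 1 from rfl, iteratedDeriv_succ, iteratedDeriv_one]
  rw [h2, hd1.deriv_eq, hG1.deriv]
  have hPhix : Real.exp (S (x i)) = Φ x := by
    rw [← step1 (x i) hxi, Function.update_eq_self]
  rw [hPhix]
  ring
/-- The Jastrow wavefunction `Φ(x) = ∏_{i<j}|sinh(c x_{ij})|^λ exp(−mω∑x_k²/(2ħ))` is an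
exact eigenstate of the harmonically trapped hyperbolic model, with the `1/sinh²` two-body
interaction and the long-range `coth·x` term, with eigenvalue
`(1/2)Nħω − ħ²λ²c²N(N²−1)/(6m)`. -/
theorem stmt_16 (N : ℕ) (hN : 2 ≤ N) (m hbar ω : ℝ)
    (hm : 0 < m) (hhbar : 0 < hbar) (hω : 0 < ω)
    (c : ℝ) (hc : c ≠ 0) (lam : ℝ)
    (Φ : (Fin N → ℝ) → ℝ)
    (hΦ : ∀ x, Φ x =
      (∏ i : Fin N, ∏ j ∈ univ.filter (fun j => i < j), |Real.sinh (c * (x i - x j))| ^ lam)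
      * Real.exp (- m * ω * (∑ k, (x k) ^ 2) / (2 * hbar))) :
    ∀ x : Fin N → ℝ, (∀ i j : Fin N, i ≠ j → x i ≠ x j) →
      - (hbar ^ 2 / (2 * m))
          * ∑ i : Fin N, iteratedDeriv 2 (fun y => Φ (Function.update x i y)) (x i)
        + ((1 / 2) * m * ω ^ 2 * ∑ i, (x i) ^ 2
            + (hbar ^ 2 * lam * (lam - 1) * c ^ 2 / m)
              * ∑ i : Fin N, ∑ j ∈ univ.filter (fun j => i < j),
                  1 / (Real.sinh (c * (x i - x j))) ^ 2
            - hbar * lam * ω * c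
              * ∑ i : Fin N, ∑ j ∈ univ.filter (fun j => i < j),
                  coth (c * (x i - x j)) * (x i - x j)) * Φ x
      = ((1 / 2) * (N : ℝ) * hbar * ω
          - hbar ^ 2 * lam ^ 2 * c ^ 2 * (N : ℝ) * ((N : ℝ) ^ 2 - 1) / (6 * m)) * Φ x := by
  intro x hx
  have hm' : m ≠ 0 := hm.ne'
  have hh' : hbar ≠ 0 := hhbar.ne'
  set t : Fin N → Fin N → ℝ := fun i j => coth (c * (x i - x j)) with ht
  have hxne : ∀ i j : Fin N, i ≠ j → c * (x i - x j) ≠ 0 :=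
    fun i j h => mul_ne_zero hc (sub_ne_zero.2 (hx i j h))
  have todd : ∀ i j : Fin N, t j i = - t i j := by
    intro i j
    show coth (c * (x j - x i)) = - coth (c * (x i - x j))
    rw [show c * (x j - x i) = -(c * (x i - x j)) by ring, coth_neg']
  -- named sums
  set R : ℝ := ∑ i : Fin N, ∑ j ∈ univ.filter (fun j => i < j),
      1 / (Real.sinh (c * (x i - x j))) ^ 2 with hR
  set X : ℝ := ∑ i : Fin N, ∑ j ∈ univ.filter (fun j => i < j),
      coth (c * (x i - x j)) * (x i - x j) with hX
  set P2 : ℝ := ∑ i : Fin N, ∑ j ∈ univ.erase i, (t i j)^2 with hP2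
  set W : ℝ := ∑ i : Fin N, ∑ j ∈ univ.erase i, ∑ k ∈ (univ.erase i).erase j,
      t i j * t i k with hW
  set XC : ℝ := ∑ i : Fin N, x i * ∑ j ∈ univ.erase i, t i j with hXC
  set S2 : ℝ := ∑ i, (x i)^2 with hS2
  have hcard : ∀ i : Fin N, ∑ j ∈ univ.erase i, (1:ℝ) = (N:ℝ) - 1 := by
    intro i
    rw [Finset.sum_const, Finset.card_erase_of_mem (Finset.mem_univ i), Finset.card_univ,
      Fintype.card_fin, nsmul_eq_mul, Nat.cast_sub (by omega : 1 ≤ N)]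
    norm_num
  -- P2 = N(N-1) + 2R
  have hF1 : P2 = (N:ℝ) * ((N:ℝ) - 1) + 2 * R := by
    rw [hP2, sum_swap_split (fun i j => (t i j)^2)]
    have hterm : ∀ i : Fin N, ∀ j ∈ univ.filter (fun j => i < j),
        (t i j)^2 + (t j i)^2 = 2 * (1 / (Real.sinh (c * (x i - x j))) ^ 2) + 2 := by
      intro i j hj
      simp only [Finset.mem_filter] at hj
      rw [todd i j, neg_sq]
      have := coth_sq' (hxne i j (Fin.ne_of_lt hj.2))
      show coth (c * (x i - x j))^2 + coth (c * (x i - x j))^2 = _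
      rw [this]
      ring
    rw [Finset.sum_congr rfl (fun i _ => Finset.sum_congr rfl (hterm i))]
    simp only [Finset.sum_add_distrib, ← Finset.mul_sum]
    have h1 : ∑ i : Fin N, ∑ j ∈ univ.filter (fun j => i < j), (1:ℝ)
        = (N:ℝ) * ((N:ℝ) - 1) / 2 := by
      have := sum_swap_split (N := N) (fun _ _ => (1:ℝ))
      rw [Finset.sum_congr rfl (fun i _ => hcard i), Finset.sum_const, Finset.card_univ,
        Fintype.card_fin, nsmul_eq_mul] at this
      have h2 : ∑ i : Fin N, ∑ j ∈ univ.filter (fun j => i < j), ((1:ℝ) + 1)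
          = 2 * ∑ i : Fin N, ∑ j ∈ univ.filter (fun j => i < j), (1:ℝ) := by
        simp [Finset.mul_sum, two_mul]
      rw [h2] at this
      linarith
    rw [← hR]
    have h3 : ∑ i : Fin N, ∑ j ∈ univ.filter (fun j => i < j), (2:ℝ)
        = (N:ℝ) * ((N:ℝ) - 1) := by
      have h4 : ∑ i : Fin N, ∑ j ∈ univ.filter (fun j => i < j), (2:ℝ)
          = 2 * ∑ i : Fin N, ∑ j ∈ univ.filter (fun j => i < j), (1:ℝ) := by
        simp only [Finset.mul_sum]
        exact Finset.sum_congr rfl (fun i _ => Finset.sum_congr rfl (fun j _ => by ring))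
      rw [h4, h1]; ring
    rw [h3]
    ring
  -- XC = X
  have hF3 : XC = X := by
    rw [hXC, hX]
    simp only [Finset.mul_sum]
    rw [sum_swap_split (fun i j => x i * t i j)]
    apply Finset.sum_congr rfl
    intro i _
    apply Finset.sum_congr rfl
    intro j hj
    rw [todd i j]
    show x i * t i j + x j * (- t i j) = t i j * (x i - x j)
    ring
  -- 3W = N(N-1)(N-2)
  have hWval : 3 * W = (N:ℝ) * ((N:ℝ) - 1) * ((N:ℝ) - 2) := by
    rw [hW]
    apply triple_sum hN
    intro i j k hij hik hjk
    have hab : c * (x i - x j) + c * (x j - x k) = c * (x i - x k) := by ring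
    have h := coth_triple (hxne i j hij) (hxne j k hjk)
      (by rw [hab]; exact hxne i k hik)
    rw [hab] at h
    show coth (c * (x i - x j)) * coth (c * (x i - x k))
        + coth (c * (x j - x k)) * coth (c * (x j - x i))
        + coth (c * (x k - x i)) * coth (c * (x k - x j)) = 1
    rw [show c * (x j - x i) = -(c * (x i - x j)) by ring, coth_neg',
        show c * (x k - x i) = -(c * (x i - x k)) by ring, coth_neg',
        show c * (x k - x j) = -(c * (x j - x k)) by ring, coth_neg']
    linarith [h]
  -- sum of squares of row sums
  have hF2 : ∑ i : Fin N, (∑ j ∈ univ.erase i, t i j)^2 = P2 + W := by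
    have hsq : ∀ i : Fin N, (∑ j ∈ univ.erase i, t i j)^2
        = (∑ j ∈ univ.erase i, (t i j)^2)
          + ∑ j ∈ univ.erase i, ∑ k ∈ (univ.erase i).erase j, t i j * t i k := by
      intro i
      rw [sq, Finset.sum_mul_sum, ← Finset.sum_add_distrib]
      apply Finset.sum_congr rfl
      intro j hj
      rw [← Finset.add_sum_erase _ (fun k => t i j * t i k) hj, sq]
    rw [Finset.sum_congr rfl (fun i _ => hsq i), Finset.sum_add_distrib, hP2, hW]
  -- apply the second-derivative formula
  have hkey : ∑ i : Fin N, iteratedDeriv 2 (fun y => Φ (Function.update x i y)) (x i)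
      = (∑ i : Fin N, ((lam * (c^2 * ∑ j ∈ univ.erase i, (1 - (t i j)^2)) - m*ω/hbar)
          + (lam * (c * ∑ j ∈ univ.erase i, t i j) - m*ω*(x i)/hbar)^2)) * Φ x := by
    rw [Finset.sum_mul]
    exact Finset.sum_congr rfl (fun i _ => key_deriv m hbar ω c lam hh' hc Φ hΦ x hx i)
  rw [hkey]
  -- total coefficient
  have hQ : ∑ i : Fin N, ((lam * (c^2 * ∑ j ∈ univ.erase i, (1 - (t i j)^2)) - m*ω/hbar)
          + (lam * (c * ∑ j ∈ univ.erase i, t i j) - m*ω*(x i)/hbar)^2)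
      = lam*c^2*((N:ℝ)*((N:ℝ)-1) - P2) - (N:ℝ)*(m*ω/hbar)
        + lam^2*c^2*(P2 + W) - 2*lam*c*(m*ω/hbar)*XC + (m*ω/hbar)^2*S2 := by
    have hEi : ∀ i : Fin N, ((lam * (c^2 * ∑ j ∈ univ.erase i, (1 - (t i j)^2)) - m*ω/hbar)
          + (lam * (c * ∑ j ∈ univ.erase i, t i j) - m*ω*(x i)/hbar)^2)
        = lam*c^2*((N:ℝ)-1) - lam*c^2*(∑ j ∈ univ.erase i, (t i j)^2) - m*ω/hbar
          + lam^2*c^2*((∑ j ∈ univ.erase i, t i j)^2)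
          - 2*lam*c*(m*ω/hbar)*(x i * ∑ j ∈ univ.erase i, t i j)
          + (m*ω/hbar)^2*((x i)^2) := by
      intro i
      have hs : ∑ j ∈ univ.erase i, (1 - (t i j)^2)
          = ((N:ℝ)-1) - ∑ j ∈ univ.erase i, (t i j)^2 := by
        rw [Finset.sum_sub_distrib, hcard i]
      rw [hs]; ring
    rw [Finset.sum_congr rfl (fun i _ => hEi i)]
    simp only [Finset.sum_add_distrib, Finset.sum_sub_distrib, Finset.sum_const,
      Finset.card_univ, Fintype.card_fin, nsmul_eq_mul, ← Finset.mul_sum]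
    rw [← hP2, ← hXC, ← hS2, hF2]
    ring
  rw [hQ]
  have hWv : W = (N:ℝ) * ((N:ℝ) - 1) * ((N:ℝ) - 2) / 3 := by linarith [hWval]
  rw [hF1, hF3, hWv]
  field_simp
  ring
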